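/- Let n ≥ 1, β > 0 and σ > 0, and let g : ℝⁿ → ℂ be measurable with ∫_{ℝⁿ} |g(ξ)|² e^{|ξ|³/σ} dξ < ∞. Then ∫_{ℝⁿ} |g(ξ)|² e^{|ξ|²/(4β)} dξ ≤ e^{σ²/(432β³)} · ∫_{ℝⁿ} |g(ξ)|² e^{|ξ|³/σ} dξ; in particular the left-hand integral is finite. -/
import Mathlib


open MeasureTheory

lemma key_ineq (β σ r : ℝ) (hβ : 0 < β) (hσ : 0 < σ) (hr : 0 ≤ r) :
    r ^ 2 / (4 * β) ≤ σ ^ 2 / (432 * β ^ 3) + r ^ 3 / σ := by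
  rw [div_add_div _ _ (by positivity) (ne_of_gt hσ), div_le_div_iff₀ (by positivity) (by positivity)]
  nlinarith [mul_nonneg (sq_nonneg (6 * β * r - σ)) (by positivity : (0:ℝ) ≤ 2 * (6 * β * r) + σ),
    sq_nonneg (β * r), sq_nonneg σ]

/-- If `g : ℝⁿ → ℂ` is measurable with `∫ |g(ξ)|² e^{|ξ|³/σ} dξ < ∞`, then
`∫ |g(ξ)|² e^{|ξ|²/(4β)} dξ ≤ e^{σ²/(432β³)} · ∫ |g(ξ)|² e^{|ξ|³/σ} dξ`; in particular the
left-hand integral is finite. -/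
theorem stmt_6 (n : ℕ) (hn : 1 ≤ n) (β σ : ℝ) (hβ : 0 < β) (hσ : 0 < σ)
    (g : EuclideanSpace ℝ (Fin n) → ℂ) (hg : Measurable g)
    (hfin : (∫⁻ ξ, ENNReal.ofReal (‖g ξ‖ ^ 2 * Real.exp (‖ξ‖ ^ 3 / σ))) < ⊤) :
    (∫⁻ ξ, ENNReal.ofReal (‖g ξ‖ ^ 2 * Real.exp (‖ξ‖ ^ 2 / (4 * β))))
      ≤ ENNReal.ofReal (Real.exp (σ ^ 2 / (432 * β ^ 3))) *
        (∫⁻ ξ, ENNReal.ofReal (‖g ξ‖ ^ 2 * Real.exp (‖ξ‖ ^ 3 / σ))) ∧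
    (∫⁻ ξ, ENNReal.ofReal (‖g ξ‖ ^ 2 * Real.exp (‖ξ‖ ^ 2 / (4 * β)))) < ⊤ := by
  have hmain : (∫⁻ ξ, ENNReal.ofReal (‖g ξ‖ ^ 2 * Real.exp (‖ξ‖ ^ 2 / (4 * β))))
      ≤ ENNReal.ofReal (Real.exp (σ ^ 2 / (432 * β ^ 3))) *
        (∫⁻ ξ, ENNReal.ofReal (‖g ξ‖ ^ 2 * Real.exp (‖ξ‖ ^ 3 / σ))) := by
    rw [← lintegral_const_mul' _ _ ENNReal.ofReal_ne_top]
    refine lintegral_mono fun ξ => ?_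
    rw [← ENNReal.ofReal_mul (Real.exp_nonneg _)]
    refine ENNReal.ofReal_le_ofReal ?_
    have h := key_ineq β σ ‖ξ‖ hβ hσ (norm_nonneg _)
    calc ‖g ξ‖ ^ 2 * Real.exp (‖ξ‖ ^ 2 / (4 * β))
        ≤ ‖g ξ‖ ^ 2 * (Real.exp (σ ^ 2 / (432 * β ^ 3)) * Real.exp (‖ξ‖ ^ 3 / σ)) := by
          rw [← Real.exp_add]
          exact mul_le_mul_of_nonneg_left (Real.exp_le_exp.mpr h) (by positivity)
      _ = Real.exp (σ ^ 2 / (432 * β ^ 3)) * (‖g ξ‖ ^ 2 * Real.exp (‖ξ‖ ^ 3 / σ)) := by ring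
  exact ⟨hmain, lt_of_le_of_lt hmain (ENNReal.mul_lt_top ENNReal.ofReal_lt_top hfin)⟩
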